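/- Let M be an N×N complex matrix, T > 0, and let f : ℝ → ℂ^N be continuous and T-periodic. If the matrix exp(T·M) - I is invertible (equivalently, 1 is not a Floquet multiplier), then there exists a unique function y : ℝ → ℂ^N such that y is T-periodic and y'(t) = M y(t) + f(t) for all t ∈ ℝ. -/

import Mathlib

/-!
Every solution of `y' = A y + f` is determined by its value at one point (the right-hand side is
Lipschitz in `y`), so it is given by variation of constants,
`y t = exp (t A) (y 0 + ∫₀ᵗ exp (-s A) f s ds)`. As `f` is `T`-periodic, `t ↦ y (t + T)` solves
the same equation, so `y` is `T`-periodic iff `y T = y 0`, i.e. iff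
`(exp (T A) - 1) (y 0) = - exp (T A) ∫₀ᵀ exp (-s A) f s ds`.
Invertibility of `exp (T A) - 1` leaves exactly one admissible `y 0`.
-/

open Function NormedSpace

section LinearODE

variable {E : Type*} [NormedAddCommGroup E] [NormedSpace ℝ E] (A : E →L[ℝ] E) (f : ℝ → E)

theorem eq_of_hasDerivAt_clm_add {y z : ℝ → E} (hy : ∀ t, HasDerivAt y (A (y t) + f t) t)
    (hz : ∀ t, HasDerivAt z (A (z t) + f t) t) {t₀ : ℝ} (h : y t₀ = z t₀) : y = z :=
  ODE_solution_unique_univ (v := fun t x => A x + f t) (s := fun _ => Set.univ)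
    (fun t => (A.lipschitz.add (LipschitzWith.const (f t))).lipschitzOnWith)
    (fun t => ⟨hy t, trivial⟩) (fun t => ⟨hz t, trivial⟩) h

theorem periodic_of_hasDerivAt_clm_add {y : ℝ → E} {T : ℝ} (hf : Periodic f T)
    (hy : ∀ t, HasDerivAt y (A (y t) + f t) t) (hyT : y T = y 0) : Periodic y T := by
  have hshift : ∀ t, HasDerivAt (fun s => y (s + T)) (A (y (t + T)) + f t) t := fun t => by
    simpa only [hf t] using (hy (t + T)).comp_add_const t T
  exact congrFun (eq_of_hasDerivAt_clm_add A f hshift hy (t₀ := 0) (by simpa using hyT))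

noncomputable def variationOfConstants (c : E) (t : ℝ) : E :=
  exp (t • A) (c + ∫ s in (0 : ℝ)..t, exp ((-s) • A) (f s))

theorem variationOfConstants_zero (c : E) : variationOfConstants A f c 0 = c := by
  simp [variationOfConstants]

theorem variationOfConstants_eq_self_iff (c : E) (T : ℝ) :
    variationOfConstants A f c T = c ↔
      (exp (T • A) - 1) c = -exp (T • A) (∫ s in (0 : ℝ)..T, exp ((-s) • A) (f s)) := by
  rw [variationOfConstants, map_add, sub_apply, one_apply_eq_self, eq_neg_iff_add_eq_zero,
    sub_add_eq_add_sub, sub_eq_zero]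

variable [CompleteSpace E]

-- The `exp` API is stated for normed `ℚ`-algebras, which `E →L[ℝ] E` is not by instance.
theorem exp_smul_mul_exp_neg_smul (t : ℝ) : exp (t • A) * exp ((-t) • A) = 1 := by
  let : NormedAlgebra ℚ (E →L[ℝ] E) := .restrictScalars ℚ ℝ _
  rw [← exp_add_of_commute (((Commute.refl A).smul_left t).smul_right (-t)), ← add_smul,
    add_neg_cancel, zero_smul, exp_zero]

theorem hasDerivAt_variationOfConstants (hf : Continuous f) (c : E) (t : ℝ) :
    HasDerivAt (variationOfConstants A f c) (A (variationOfConstants A f c t) + f t) t := by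
  let : NormedAlgebra ℚ (E →L[ℝ] E) := .restrictScalars ℚ ℝ _
  have hint : Continuous fun s : ℝ => exp ((-s) • A) (f s) :=
    (exp_continuous.comp (continuous_neg.smul continuous_const)).clm_apply hf
  refine ((hasDerivAt_exp_smul_const A t).clm_apply
    ((hint.integral_hasStrictDerivAt 0 t).hasDerivAt.const_add c)).congr_deriv ?_
  rw [← mul_apply_eq_comp, exp_smul_mul_exp_neg_smul, one_apply_eq_self,
    ((Commute.refl A).smul_left t).exp_left.eq]
  rfl

theorem eq_variationOfConstants (hf : Continuous f) {y : ℝ → E}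
    (hy : ∀ t, HasDerivAt y (A (y t) + f t) t) : y = variationOfConstants A f (y 0) :=
  eq_of_hasDerivAt_clm_add A f hy (hasDerivAt_variationOfConstants A f hf (y 0))
    (variationOfConstants_zero A f (y 0)).symm

theorem existsUnique_periodic_hasDerivAt_clm_add (hf : Continuous f) {T : ℝ}
    (hfT : Periodic f T) (hA : IsUnit (exp (T • A) - 1)) :
    ∃! y : ℝ → E, Periodic y T ∧ ∀ t, HasDerivAt y (A (y t) + f t) t := by
  obtain ⟨c, hc, hc_unique⟩ := (ContinuousLinearMap.isUnit_iff_bijective.mp hA).existsUnique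
    (-exp (T • A) (∫ s in (0 : ℝ)..T, exp ((-s) • A) (f s)))
  have hsol := hasDerivAt_variationOfConstants A f hf
  refine ⟨variationOfConstants A f c, ⟨?_, hsol c⟩, ?_⟩
  · refine periodic_of_hasDerivAt_clm_add A f hfT (hsol c) ?_
    rw [variationOfConstants_zero, variationOfConstants_eq_self_iff, hc]
  · rintro y ⟨hyT, hy⟩
    have hy0 : y 0 = c := by
      refine hc_unique _ ((variationOfConstants_eq_self_iff A f _ T).mp ?_)
      rw [← eq_variationOfConstants A f hf hy, ← zero_add T, hyT 0]
    rw [eq_variationOfConstants A f hf hy, hy0]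

end LinearODE

namespace Matrix

variable {n : Type*} [Fintype n] [DecidableEq n]

noncomputable def toRealCLM : Matrix n n ℂ →ₐ[ℝ] (n → ℂ) →L[ℝ] n → ℂ :=
  AlgHom.ofLinearMap
    (LinearMap.toContinuousLinearMap.toLinearMap ∘ₗ LinearMap.restrictScalarsₗ ℝ ℂ _ _ ℝ ∘ₗ
      (toLin' (R := ℂ)).toLinearMap.restrictScalars ℝ)
    (by ext; simp) (fun P Q => by ext; simp)

@[simp]
theorem toRealCLM_apply (P : Matrix n n ℂ) (v : n → ℂ) : toRealCLM P v = P *ᵥ v := rfl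

section

-- `exp` does not depend on the norm; any matrix norm makes `map_exp` applicable.
attribute [local instance] Matrix.linftyOpNormedRing Matrix.linftyOpNormedAlgebra

theorem toRealCLM_exp (P : Matrix n n ℂ) : toRealCLM (exp P) = exp (toRealCLM P) :=
  map_exp _ (LinearMap.continuous_of_finiteDimensional toRealCLM.toLinearMap) P

end

end Matrix

theorem stmt_10_general {N : ℕ} (M : Matrix (Fin N) (Fin N) ℂ) (T : ℝ)
    (f : ℝ → Fin N → ℂ) (hf_cont : Continuous f) (hf_per : ∀ t, f (t + T) = f t)
    (hmult : IsUnit (NormedSpace.exp ((T : ℂ) • M) - 1)) :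
    ∃! y : ℝ → Fin N → ℂ, (∀ t, y (t + T) = y t) ∧
      ∀ t : ℝ, HasDerivAt y (M.mulVec (y t) + f t) t := by
  have hA : IsUnit (exp (T • M.toRealCLM) - 1) := by
    simpa only [map_sub, map_one, Matrix.toRealCLM_exp, Complex.coe_smul, map_smul]
      using hmult.map Matrix.toRealCLM
  simpa only [Matrix.toRealCLM_apply, Periodic] using
    existsUnique_periodic_hasDerivAt_clm_add M.toRealCLM f hf_cont hf_per hA

theorem stmt_10 {N : ℕ} (M : Matrix (Fin N) (Fin N) ℂ) (T : ℝ) (hT : 0 < T)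
    (f : ℝ → Fin N → ℂ) (hf_cont : Continuous f) (hf_per : ∀ t, f (t + T) = f t)
    (hmult : IsUnit (NormedSpace.exp ((T : ℂ) • M) - 1)) :
    ∃! y : ℝ → Fin N → ℂ, (∀ t, y (t + T) = y t) ∧
      ∀ t : ℝ, HasDerivAt y (M.mulVec (y t) + f t) t :=
  stmt_10_general M T f hf_cont hf_per hmult
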